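/- arXiv:1811.11830 — 2 statements merged into one kernel-verified Lean document; each statement's English description precedes it below -/
import Mathlib

section
/- Let g be a finite-dimensional Lie algebra over ℂ graded by subspaces (g_i)_{i∈ℤ} (internal direct sum with ⁅g_i,g_j⁆ ⊆ g_{i+j}), let h ≥ 2 be an integer, I ∈ g_{−1}, E ∈ g_{h−1}, and let N = dim g. Then for every μ ∈ ℂ with μ ≠ 0 and every p ∈ ℂ, det(p·id_g + ad(I − μ^h·E)) = μ^N · det((μ^{−1}p)·id_g + ad(I − E)). -/
/-!
The grading automorphism `σ_μ`, acting by `μ ^ i` on `g_i`, is a Lie algebra automorphism, and it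
sends `I - E` to `μ⁻¹ • I - μ ^ (h - 1) • E = μ⁻¹ • (I - μ ^ h • E)`. Hence
`p + ad (I - μ ^ h • E) = σ_μ ∘ μ • ((μ⁻¹ * p) + ad (I - E)) ∘ σ_μ⁻¹`, and taking determinants
gives the factor `μ ^ dim g`.
-/

open DirectSum LieAlgebra

section GradeScaling

variable {R M : Type*} [CommRing R] [AddCommGroup M] [Module R M]
  (G : ℤ → Submodule R M) [Decomposition G]

noncomputable def gradeScaling (c : Rˣ) : M ≃ₗ[R] M :=
  decomposeLinearEquiv G ≪≫ₗ congrLinearEquiv (fun i => LinearEquiv.smulOfUnit (c ^ i)) ≪≫ₗ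
    (decomposeLinearEquiv G).symm

variable {G} in
theorem gradeScaling_apply_of_mem (c : Rˣ) {i : ℤ} {x : M} (hx : x ∈ G i) :
    gradeScaling G c x = c ^ i • x := by
  simp only [gradeScaling, LinearEquiv.trans_apply, decomposeLinearEquiv_apply,
    decompose_of_mem _ hx, ← lof_eq_of R, coe_congrLinearEquiv, lmap_lof,
    decomposeLinearEquiv_symm_lof]
  rfl

end GradeScaling

section LieAlgebra

variable {R L : Type*} [CommRing R] [LieRing L] [LieAlgebra R L]
  (G : ℤ → Submodule R L) [Decomposition G]

theorem gradeScaling_lie (hbracket : ∀ i j : ℤ, ∀ x ∈ G i, ∀ y ∈ G j, ⁅x, y⁆ ∈ G (i + j))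
    (c : Rˣ) (x y : L) :
    gradeScaling G c ⁅x, y⁆ = ⁅gradeScaling G c x, gradeScaling G c y⁆ := by
  induction x using Decomposition.inductionOn G with
  | zero => simp
  | homogeneous x =>
    induction y using Decomposition.inductionOn G with
    | zero => simp
    | homogeneous y =>
      rw [gradeScaling_apply_of_mem c (hbracket _ _ _ x.2 _ y.2), gradeScaling_apply_of_mem c x.2,
        gradeScaling_apply_of_mem c y.2, Units.smul_def, Units.smul_def, Units.smul_def,
        smul_lie, lie_smul, smul_smul, zpow_add, Units.val_mul]
    | add y z hy hz => simp only [lie_add, map_add, hy, hz]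
  | add x z hx hz => simp only [add_lie, map_add, hx, hz]

noncomputable def gradeScalingLieEquiv
    (hbracket : ∀ i j : ℤ, ∀ x ∈ G i, ∀ y ∈ G j, ⁅x, y⁆ ∈ G (i + j)) (c : Rˣ) : L ≃ₗ⁅R⁆ L :=
  { gradeScaling G c with map_lie' := gradeScaling_lie G hbracket c _ _ }

@[simp]
theorem gradeScalingLieEquiv_apply
    (hbracket : ∀ i j : ℤ, ∀ x ∈ G i, ∀ y ∈ G j, ⁅x, y⁆ ∈ G (i + j)) (c : Rˣ) (x : L) :
    gradeScalingLieEquiv G hbracket c x = gradeScaling G c x :=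
  rfl

end LieAlgebra

theorem stmt9_general {g : Type*} [LieRing g] [LieAlgebra ℂ g]
    (G : ℤ → Submodule ℂ g) (hG : DirectSum.IsInternal G)
    (hbracket : ∀ i j : ℤ, ∀ x ∈ G i, ∀ y ∈ G j, ⁅x, y⁆ ∈ G (i + j))
    (h : ℕ) (I E : g) (hI : I ∈ G (-1)) (hE : E ∈ G ((h : ℤ) - 1))
    (μ : ℂ) (hμ : μ ≠ 0) (p : ℂ) :
    LinearMap.det (p • (1 : Module.End ℂ g) + LieAlgebra.ad ℂ g (I - μ ^ h • E)) =
      μ ^ (Module.finrank ℂ g) *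
        LinearMap.det ((μ⁻¹ * p) • (1 : Module.End ℂ g) + LieAlgebra.ad ℂ g (I - E)) := by
  let := hG.chooseDecomposition
  let σ := gradeScalingLieEquiv G hbracket (Units.mk0 μ hμ)
  have hσ : μ • σ (I - E) = I - μ ^ h • E := by
    simp only [σ, gradeScalingLieEquiv_apply, map_sub, gradeScaling_apply_of_mem _ hI,
      gradeScaling_apply_of_mem _ hE, Units.smul_def, Units.val_zpow_eq_zpow_val, Units.val_mk0,
      smul_sub, smul_smul]
    rw [← zpow_one_add₀ hμ, ← zpow_one_add₀ hμ, add_neg_cancel, add_sub_cancel, zpow_zero,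
      one_smul, zpow_natCast]
  have hconj : p • 1 + ad ℂ g (I - μ ^ h • E) =
      σ.toLinearEquiv.conj (μ • ((μ⁻¹ * p) • 1 + ad ℂ g (I - E))) := by
    rw [map_smul, map_add, map_smul, Module.End.one_eq_id, LinearEquiv.conj_id, conj_ad_apply,
      smul_add, smul_smul, mul_inv_cancel_left₀ hμ, ← map_smul, hσ]
  rw [hconj, LinearEquiv.conj_apply, LinearMap.comp_assoc, LinearMap.det_conj,
    LinearMap.det_smul]

/-- The conjugation identity of Appendix A.3: in a finite-dimensional ℤ-graded complex
Lie algebra, with `I ∈ g₋₁`, `E ∈ g_{h-1}` (`h ≥ 2`) and `N = dim g`, for every `μ ≠ 0`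
and every `p`, `det(p·id + ad(I - μ^h·E)) = μ^N · det((μ⁻¹p)·id + ad(I - E))`. -/
theorem stmt9 {g : Type*} [LieRing g] [LieAlgebra ℂ g] [FiniteDimensional ℂ g]
    (G : ℤ → Submodule ℂ g) (hG : DirectSum.IsInternal G)
    (hbracket : ∀ i j : ℤ, ∀ x ∈ G i, ∀ y ∈ G j, ⁅x, y⁆ ∈ G (i + j))
    (h : ℕ) (hh : 2 ≤ h) (I E : g) (hI : I ∈ G (-1)) (hE : E ∈ G ((h : ℤ) - 1))
    (μ : ℂ) (hμ : μ ≠ 0) (p : ℂ) :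
    LinearMap.det (p • (1 : Module.End ℂ g) + LieAlgebra.ad ℂ g (I - μ ^ h • E)) =
      μ ^ (Module.finrank ℂ g) *
        LinearMap.det ((μ⁻¹ * p) • (1 : Module.End ℂ g) + LieAlgebra.ad ℂ g (I - E)) :=
  stmt9_general G hG hbracket h I E hI hE μ hμ p
end

section
/- Let g be a finite-dimensional Lie algebra over ℂ graded by subspaces (g_i)_{i∈ℤ} (internal direct sum with ⁅g_i,g_j⁆ ⊆ g_{i+j}), let h ≥ 2 be an integer, I ∈ g_{−1}, E ∈ g_{h−1}. Assume ad(I − E) is diagonalizable, let n = dim ker(ad(I − E)), and assume dim g = n(h+1). Then for every fixed p ∈ ℂ with p ≠ 0, the function λ ↦ det(p·id_g + ad(I − λ·E)) is a polynomial in λ of degree exactly n. -/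
/-!
Let `φ_ν` be the Lie algebra automorphism acting by `ν ^ i` on `g_i`. Since
`φ_ν (ν • (I - E)) = I - ν ^ h • E`, the polynomial `q(λ) = det (p + ad (I - λ E))` satisfies
`q (ν ^ h) = det (p + ν ad (I - E)) = ∏ₖ (p + ν cₖ)`, the `cₖ` being the eigenvalues of the
diagonalizable `ad (I - E)`. The right-hand side has degree the number of nonzero `cₖ`, that is
`dim g - n = n h`, so `h · deg q = n h`.
-/

open Polynomial Module

theorem LinearMap.exists_det_add_smul_eq_eval {R M : Type*} [CommRing R] [AddCommGroup M]
    [Module R M] [Module.Free R M] [Module.Finite R M] (A B : Module.End R M) :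
    ∃ q : R[X], ∀ t : R, LinearMap.det (A + t • B) = q.eval t := by
  classical
  let b := Module.Free.chooseBasis R M
  refine ⟨((toMatrix b b A).map C + (X : R[X]) • (toMatrix b b B).map C).det, fun t => ?_⟩
  rw [← LinearMap.det_toMatrix b, ← coe_evalRingHom, RingHom.map_det]
  congr 1
  ext i j
  simp [mul_comm t]

theorem LinearMap.det_eq_prod_of_apply_basis_eq_smul {R M ι : Type*} [CommRing R]
    [AddCommGroup M] [Module R M] [Fintype ι] [DecidableEq ι] (b : Basis ι R M)
    {f : Module.End R M} {c : ι → R} (hf : ∀ i, f (b i) = c i • b i) :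
    LinearMap.det f = ∏ i, c i := by
  have hdiag : f = Matrix.toLin b b (Matrix.diagonal c) :=
    b.ext fun i => by simp [hf, Matrix.toLin_self, Matrix.diagonal_apply]
  rw [hdiag, LinearMap.det_toLin, Matrix.det_diagonal]

universe u

theorem Module.End.exists_basis_eigenvectors {K : Type u} {V : Type*} [Field K] [AddCommGroup V]
    [Module K V] [FiniteDimensional K V] {f : Module.End K V}
    (hf : ⨆ c, f.eigenspace c = ⊤) :
    ∃ (ι : Type u) (_ : Fintype ι) (b : Basis ι K V) (c : ι → K),
      (∀ i, f (b i) = c i • b i) ∧ Nat.card {i // c i = 0} = finrank K (LinearMap.ker f) := by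
  classical
  let hInt := DirectSum.isInternal_submodule_of_iSupIndep_of_iSup_eq_top f.eigenspaces_iSupIndep hf
  let b := hInt.collectedBasis fun c => Module.finBasis K (f.eigenspace c)
  refine ⟨_, FiniteDimensional.fintypeBasisIndex b, b, Sigma.fst,
    fun i => mem_eigenspace_iff.mp (hInt.collectedBasis_mem _ i), ?_⟩
  rw [Nat.card_congr (Equiv.sigmaSubtype 0), Nat.card_eq_fintype_card, Fintype.card_fin,
    eigenspace_zero]

theorem Module.End.exists_det_smul_one_add_smul_eq_eval_natDegree_eq_finrank_range {K V : Type*}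
    [Field K] [AddCommGroup V] [Module K V] [FiniteDimensional K V] {f : Module.End K V}
    (hf : ⨆ c, f.eigenspace c = ⊤) {p : K} (hp : p ≠ 0) :
    ∃ P : K[X], P.natDegree = finrank K (LinearMap.range f) ∧
      ∀ ν : K, LinearMap.det (p • 1 + ν • f) = P.eval ν := by
  classical
  obtain ⟨ι, _, b, c, hb, hzero⟩ := exists_basis_eigenvectors hf
  have hfactor : ∀ i, C (c i) * X + C p ≠ 0 := fun i h0 => hp (by simpa using congrArg (eval 0) h0)
  refine ⟨∏ i, (C (c i) * X + C p), ?_, fun ν => ?_⟩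
  · have hcard : Fintype.card {i // ¬ c i = 0} = finrank K (LinearMap.range f) := by
      have := f.finrank_range_add_finrank_ker
      rw [Fintype.card_subtype_compl, ← Nat.card_eq_fintype_card (α := {i // c i = 0}), hzero,
        ← Module.finrank_eq_card_basis b]
      omega
    rw [natDegree_prod _ _ fun i _ => hfactor i, ← hcard, Fintype.card_subtype, Finset.card_filter]
    refine Finset.sum_congr rfl fun i _ => ?_
    by_cases hi : c i = 0 <;> simp [hi]
  · rw [eval_prod, LinearMap.det_eq_prod_of_apply_basis_eq_smul b (c := fun i => p + ν * c i)]
    · exact Finset.prod_congr rfl fun i _ => by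
        simp only [eval_add, eval_mul, eval_C, eval_X]
        ring
    · intro i
      simp only [LinearMap.add_apply, LinearMap.smul_apply, Module.End.one_apply, hb, add_smul,
        smul_smul]

theorem LieAlgebra.det_smul_one_add_ad_lieEquiv {R L : Type*} [CommRing R] [LieRing L]
    [LieAlgebra R L] (e : L ≃ₗ⁅R⁆ L) (p : R) (z : L) :
    LinearMap.det (p • 1 + ad R L (e z)) = LinearMap.det (p • 1 + ad R L z) := by
  rw [← conj_ad_apply, ← LinearMap.det_conj (p • 1 + ad R L z) e.toLinearEquiv,
    ← LinearMap.comp_assoc, ← LinearEquiv.conj_apply, LinearEquiv.map_add, LinearEquiv.map_smul,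
    Module.End.one_eq_id, LinearEquiv.conj_id]

namespace DirectSum.IsInternal

section Module

variable {R M : Type*} [CommRing R] [AddCommGroup M] [Module R M] {G : ℤ → Submodule R M}

theorem linearMap_ext {N : Type*} [AddCommGroup N] [Module R N] (hG : IsInternal G)
    {f₁ f₂ : M →ₗ[R] N} (h : ∀ i, ∀ x ∈ G i, f₁ x = f₂ x) : f₁ = f₂ :=
  LinearMap.ext_on (by rw [← Submodule.iSup_eq_span, hG.submodule_iSup_eq_top]) fun x hx => by
    obtain ⟨i, hx⟩ := Set.mem_iUnion.mp hx
    exact h i x hx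

noncomputable def gradingScaling (hG : IsInternal G) (ν : Rˣ) : M ≃ₗ[R] M :=
  (LinearEquiv.ofBijective (coeLinearMap G) hG).symm ≪≫ₗ
    DFinsupp.mapRange.linearEquiv (fun i => LinearEquiv.smulOfUnit (ν ^ i)) ≪≫ₗ
    LinearEquiv.ofBijective (coeLinearMap G) hG

theorem gradingScaling_apply_of_mem (hG : IsInternal G) (ν : Rˣ) {i : ℤ} {x : M} (hx : x ∈ G i) :
    hG.gradingScaling ν x = ν ^ i • x := by
  have hx' : (LinearEquiv.ofBijective (coeLinearMap G) hG).symm x = of (fun i => G i) i ⟨x, hx⟩ :=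
    (LinearEquiv.symm_apply_eq _).mpr (coeLinearMap_of G i (⟨x, hx⟩ : G i)).symm
  simp only [gradingScaling, LinearEquiv.trans_apply, hx']
  exact (congrArg (coeLinearMap G) (DFinsupp.mapRange_single (hf := fun _ => map_zero _))).trans
    (coeLinearMap_of G i _)

end Module

section Lie

variable {R L : Type*} [CommRing R] [LieRing L] [LieAlgebra R L] {G : ℤ → Submodule R L}

theorem gradingScaling_lie (hG : IsInternal G)
    (hbracket : ∀ i j : ℤ, ∀ x ∈ G i, ∀ y ∈ G j, ⁅x, y⁆ ∈ G (i + j)) (ν : Rˣ) (x y : L) :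
    hG.gradingScaling ν ⁅x, y⁆ = ⁅hG.gradingScaling ν x, hG.gradingScaling ν y⁆ := by
  set φ : Module.End R L := (hG.gradingScaling ν : L →ₗ[R] L)
  have hcomm : LinearMap.mulLeft R φ ∘ₗ (LieAlgebra.ad R L : L →ₗ[R] Module.End R L) =
      LinearMap.mulRight R φ ∘ₗ (LieAlgebra.ad R L : L →ₗ[R] Module.End R L) ∘ₗ φ :=
    hG.linearMap_ext fun i x hx => hG.linearMap_ext fun j y hy => by
      simp [φ, gradingScaling_apply_of_mem hG ν hx, gradingScaling_apply_of_mem hG ν hy,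
        gradingScaling_apply_of_mem hG ν (hbracket i j x hx y hy), zpow_add, mul_smul,
        Units.smul_def]
  exact congr($hcomm x y)

noncomputable def gradingLieEquiv (hG : IsInternal G)
    (hbracket : ∀ i j : ℤ, ∀ x ∈ G i, ∀ y ∈ G j, ⁅x, y⁆ ∈ G (i + j)) (ν : Rˣ) : L ≃ₗ⁅R⁆ L :=
  { hG.gradingScaling ν with map_lie' := hG.gradingScaling_lie hbracket ν _ _ }

theorem det_smul_one_add_ad_sub_pow_smul (hG : IsInternal G)
    (hbracket : ∀ i j : ℤ, ∀ x ∈ G i, ∀ y ∈ G j, ⁅x, y⁆ ∈ G (i + j))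
    {h : ℕ} {I E : L} (hI : I ∈ G (-1)) (hE : E ∈ G (h - 1)) (p : R) (ν : Rˣ) :
    LinearMap.det (p • 1 + LieAlgebra.ad R L (I - (ν : R) ^ h • E)) =
      LinearMap.det (p • 1 + (ν : R) • LieAlgebra.ad R L (I - E)) := by
  have hscale : hG.gradingLieEquiv hbracket ν ((ν : R) • (I - E)) = I - (ν : R) ^ h • E := by
    change hG.gradingScaling ν _ = _
    rw [map_smul, map_sub, hG.gradingScaling_apply_of_mem ν hI,
      hG.gradingScaling_apply_of_mem ν hE, ← Units.smul_def, smul_sub, smul_smul, smul_smul,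
      ← zpow_one_add, ← zpow_one_add]
    simp [← Units.val_pow_eq_pow_val, Units.smul_def]
  rw [← hscale, LieAlgebra.det_smul_one_add_ad_lieEquiv, map_smul]

end Lie

end DirectSum.IsInternal

/-- The key step of Appendix A.3 (used for Theorem 6.2): in a finite-dimensional ℤ-graded
complex Lie algebra with `I ∈ g₋₁`, `E ∈ g_{h-1}` (`h ≥ 2`), if `ad(I - E)` is
diagonalizable, `n = dim ker(ad(I - E))`, and `dim g = n(h+1)`, then for every fixed
`p ≠ 0` the function `λ ↦ det(p·id + ad(I - λ·E))` is a polynomial in `λ` of degree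
exactly `n`. -/
theorem stmt11 {g : Type*} [LieRing g] [LieAlgebra ℂ g] [FiniteDimensional ℂ g]
    (G : ℤ → Submodule ℂ g) (hG : DirectSum.IsInternal G)
    (hbracket : ∀ i j : ℤ, ∀ x ∈ G i, ∀ y ∈ G j, ⁅x, y⁆ ∈ G (i + j))
    (h : ℕ) (hh : 2 ≤ h) (I E : g) (hI : I ∈ G (-1)) (hE : E ∈ G ((h : ℤ) - 1))
    (hdiag : (⨆ c : ℂ, Module.End.eigenspace (LieAlgebra.ad ℂ g (I - E)) c) = ⊤)
    (n : ℕ) (hn : n = Module.finrank ℂ (LinearMap.ker (LieAlgebra.ad ℂ g (I - E))))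
    (hdim : Module.finrank ℂ g = n * (h + 1)) :
    ∀ p : ℂ, p ≠ 0 → ∃ q : Polynomial ℂ, q.degree = (n : ℕ) ∧
      ∀ lam : ℂ,
        LinearMap.det (p • (1 : Module.End ℂ g) + LieAlgebra.ad ℂ g (I - lam • E)) =
          q.eval lam := by
  intro p hp
  obtain ⟨q, hq⟩ := LinearMap.exists_det_add_smul_eq_eval (p • 1 + LieAlgebra.ad ℂ g I)
    (-LieAlgebra.ad ℂ g E)
  have hq_eval : ∀ lam : ℂ,
      LinearMap.det (p • 1 + LieAlgebra.ad ℂ g (I - lam • E)) = q.eval lam := fun lam => by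
    rw [← hq, map_sub, map_smul, smul_neg, add_assoc, sub_eq_add_neg]
  obtain ⟨P, hP_deg, hP_eval⟩ :=
    Module.End.exists_det_smul_one_add_smul_eq_eval_natDegree_eq_finrank_range hdiag hp
  have hP : P ≠ 0 := fun h0 => by simpa [h0, LinearMap.det_smul, hp] using hP_eval 0
  have hcomp : q.comp (X ^ h) = P := by
    refine eq_of_infinite_eval_eq _ _ <| (Set.finite_singleton 0).infinite_compl.mono fun ν hν => ?_
    rw [Set.mem_ofPred_eq, eval_comp, eval_pow, eval_X, ← hq_eval, ← hP_eval]
    exact hG.det_smul_one_add_ad_sub_pow_smul hbracket hI hE p (Units.mk0 ν hν)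
  have hrank : finrank ℂ (LinearMap.range (LieAlgebra.ad ℂ g (I - E))) = n * h := by
    have := (LieAlgebra.ad ℂ g (I - E)).finrank_range_add_finrank_ker
    rw [← hn, hdim] at this
    linarith
  have hdeg : q.natDegree * h = n * h := by
    rw [← hrank, ← hP_deg, ← hcomp, natDegree_comp, natDegree_X_pow]
  refine ⟨q, ?_, hq_eval⟩
  rw [degree_eq_natDegree (by rintro rfl; exact hP (by simpa using hcomp.symm)),
    Nat.eq_of_mul_eq_mul_right (by omega) hdeg]
end
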